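/- arXiv:math/0307022 — 6 statements merged into one kernel-verified Lean document; each statement's English description precedes it below -/
import Mathlib

section
/- In the universal enveloping algebra U(so(n,C)), define e_{ij}^q for q ≥ 1 by e_{ij}^q = Σ_{i_1,…,i_{q−1}} e_{i i_1} e_{i_1 i_2} ⋯ e_{i_{q−1} j} and e_{ij}^0 = δ_{ij}. Then for all k, l, i, j and all q ≥ 0, [e_{kl}, e_{ij}^q] = δ_{ki} e_{lj}^q + δ_{kj} e_{il}^q − δ_{il} e_{kj}^q − δ_{lj} e_{ik}^q. -/
/-!
Call a matrix `X` over the algebra a tensor operator if its entries transform under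
`ad e_{kl}` exactly as the `e_{ij}` do; the defining relation says `e` itself is one. By the
Leibniz rule the matrix product of two tensor operators is again one (the contractions over the
inner index cancel), and the identity matrix is one, so `e^q` is one by induction on `q`.
-/

/-- The iterated products `e_{ij}^q = Σ e_{i i₁} e_{i₁ i₂} ⋯ e_{i_{q-1} j}` in an
associative algebra, with `e_{ij}^0 = δ_{ij}`. -/
def epow {n : ℕ} {R : Type*} [Ring R] (e : Fin n → Fin n → R) : ℕ → Fin n → Fin n → R
  | 0, i, j => if i = j then 1 else 0
  | q + 1, i, j => ∑ k : Fin n, e i k * epow e q k j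

section TensorOperator

variable {ι R : Type*} [DecidableEq ι] [Ring R]

def IsTensorOperator (e X : ι → ι → R) : Prop :=
  ∀ k l i j, e k l * X i j - X i j * e k l =
    (if k = i then X l j else 0) + (if k = j then X i l else 0)
      - (if i = l then X k j else 0) - (if l = j then X i k else 0)

theorem isTensorOperator_delta (e : ι → ι → R) :
    IsTensorOperator e (fun i j => if i = j then 1 else 0) := by
  intro k l i j
  split_ifs <;> subst_eqs <;> simp_all [eq_comm]

theorem IsTensorOperator.mul [Fintype ι] {e X Y : ι → ι → R} (hX : IsTensorOperator e X)
    (hY : IsTensorOperator e Y) :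
    IsTensorOperator e (fun i j => ∑ m, X i m * Y m j) := by
  intro k l i j
  have leibniz : ∀ m, e k l * (X i m * Y m j) - X i m * Y m j * e k l =
      (e k l * X i m - X i m * e k l) * Y m j + X i m * (e k l * Y m j - Y m j * e k l) := by
    intro m; noncomm_ring
  rw [Finset.mul_sum, Finset.sum_mul, ← Finset.sum_sub_distrib]
  simp only [leibniz, hX _ _ _ _, hY _ _ _ _, add_mul, sub_mul, mul_add, mul_sub, ite_mul,
    mul_ite, zero_mul, mul_zero, Finset.sum_add_distrib, Finset.sum_sub_distrib,
    Finset.sum_ite_eq, Finset.sum_ite_eq', Finset.mem_univ, if_true, Finset.sum_ite_irrel,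
    Finset.sum_const_zero]
  -- The inner index produces `X i l * Y k j - X i k * Y l j` from each factor, with opposite signs.
  abel

end TensorOperator

theorem stmt1_general {n : ℕ} {R : Type*} [Ring R] (e : Fin n → Fin n → R)
    (hcomm : ∀ k l i j, e k l * e i j - e i j * e k l =
      (if k = i then e l j else 0) + (if k = j then e i l else 0)
        - (if i = l then e k j else 0) - (if l = j then e i k else 0)) :
    ∀ (q : ℕ) (k l i j : Fin n),
      e k l * epow e q i j - epow e q i j * e k l =
        (if k = i then epow e q l j else 0) + (if k = j then epow e q i l else 0)
          - (if i = l then epow e q k j else 0) - (if l = j then epow e q i k else 0) := by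
  intro q
  induction q with
  | zero => exact isTensorOperator_delta e
  | succ q ih => exact IsTensorOperator.mul hcomm ih

/-- In `U(so(n,ℂ))`, for all `k, l, i, j` and `q ≥ 0`:
`[e_{kl}, e_{ij}^q] = δ_{ki} e_{lj}^q + δ_{kj} e_{il}^q − δ_{il} e_{kj}^q − δ_{lj} e_{ik}^q`. -/
theorem stmt1 {n : ℕ} {R : Type*} [Ring R] [Algebra ℂ R] (e : Fin n → Fin n → R)
    (hskew : ∀ i j, e i j = - e j i)
    (hdiag : ∀ i, e i i = 0)
    (hcomm : ∀ k l i j, e k l * e i j - e i j * e k l =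
      (if k = i then e l j else 0) + (if k = j then e i l else 0)
        - (if i = l then e k j else 0) - (if l = j then e i k else 0)) :
    ∀ (q : ℕ) (k l i j : Fin n),
      e k l * epow e q i j - epow e q i j * e k l =
        (if k = i then epow e q l j else 0) + (if k = j then epow e q i l else 0)
          - (if i = l then epow e q k j else 0) - (if l = j then epow e q i k else 0) :=
  stmt1_general e hcomm
end

section
/- The trace element c_q := Σ_{i=1}^n e_{ii}^q is central in U(so(n,C)); more precisely, [e_{kl}, c_q] = 0 for all generators e_{kl} of so(n,C) and all q ≥ 0. -/
/-! The relations of `so(n)` say that `e_{kl}` acts on the index pairs `(i, j)` of the generators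
like an infinitesimal rotation of both indices. Since `[e_{kl}, -]` is a derivation, induction
on `q` shows that the matrix `(e_{ij}^q)` transforms in exactly the same way. Taking the trace,
the two terms coming from the first index cancel the two coming from the second. -/

section SoRelations

variable {n : ℕ} {R : Type*} [Ring R] (e : Fin n → Fin n → R)

theorem epow_succ (q : ℕ) (i j : Fin n) :
    epow e (q + 1) i j = ∑ m : Fin n, e i m * epow e q m j :=
  rfl

theorem mul_mul_sub_mul_mul (a b c : R) :
    a * (b * c) - b * c * a = (a * b - b * a) * c + b * (a * c - c * a) := by
  noncomm_ring

theorem mul_epow_sub_epow_mul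
    (hcomm : ∀ k l i j, e k l * e i j - e i j * e k l =
      (if k = i then e l j else 0) + (if k = j then e i l else 0)
        - (if i = l then e k j else 0) - (if l = j then e i k else 0))
    (q : ℕ) (k l i j : Fin n) :
    e k l * epow e q i j - epow e q i j * e k l =
      (if k = i then epow e q l j else 0) + (if k = j then epow e q i l else 0)
        - (if i = l then epow e q k j else 0) - (if l = j then epow e q i k else 0) := by
  induction q generalizing i j with
  | zero =>
    simp only [epow]
    split_ifs <;> subst_eqs <;> simp_all
  | succ q ih =>
    simp only [epow_succ, Finset.mul_sum, Finset.sum_mul, ← Finset.sum_sub_distrib,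
      mul_mul_sub_mul_mul, hcomm, ih]
    simp only [sub_mul, add_mul, ite_mul, zero_mul, mul_sub, mul_add, mul_ite, mul_zero,
      Finset.sum_add_distrib, Finset.sum_sub_distrib, Finset.sum_ite_eq, Finset.sum_ite_eq',
      Finset.mem_univ, if_true, Finset.sum_ite_irrel, Finset.sum_const_zero]
    abel

end SoRelations

theorem stmt3_general {n : ℕ} {R : Type*} [Ring R] (e : Fin n → Fin n → R)
    (hcomm : ∀ k l i j, e k l * e i j - e i j * e k l =
      (if k = i then e l j else 0) + (if k = j then e i l else 0)
        - (if i = l then e k j else 0) - (if l = j then e i k else 0)) :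
    ∀ (q : ℕ) (k l : Fin n),
      e k l * (∑ i : Fin n, epow e q i i) - (∑ i : Fin n, epow e q i i) * e k l = 0 := by
  intro q k l
  rw [Finset.mul_sum, Finset.sum_mul, ← Finset.sum_sub_distrib]
  simp only [mul_epow_sub_epow_mul e hcomm, Finset.sum_sub_distrib, Finset.sum_add_distrib,
    Finset.sum_ite_eq, Finset.sum_ite_eq', Finset.mem_univ, if_true]
  abel

/-- The higher Casimir element `c_q := Σ_i e_{ii}^q` commutes with every generator
`e_{kl}` of `so(n,ℂ)` inside `U(so(n,ℂ))`, for all `q ≥ 0`. -/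
theorem stmt3 {n : ℕ} {R : Type*} [Ring R] [Algebra ℂ R] (e : Fin n → Fin n → R)
    (hskew : ∀ i j, e i j = - e j i)
    (hdiag : ∀ i, e i i = 0)
    (hcomm : ∀ k l i j, e k l * e i j - e i j * e k l =
      (if k = i then e l j else 0) + (if k = j then e i l else 0)
        - (if i = l then e k j else 0) - (if l = j then e i k else 0)) :
    ∀ (q : ℕ) (k l : Fin n),
      e k l * (∑ i : Fin n, epow e q i i) - (∑ i : Fin n, epow e q i i) * e k l = 0 :=
  stmt3_general e hcomm
end

section
/- The translated iterated products in U(so(n,C)) satisfy the key relation ê_{ij}^{q+1} = δ_{ji} ĉ_q − ê_{ji}^q − Σ_k ê_{kj}^q ê_{ki}, where ĉ_q := Σ_i ê_{ii}^q. -/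
/-- The translated generators `ê_{ij} := e_{ij} + ((n−1)/2) δ_{ij}`. -/
noncomputable def ehat {n : ℕ} {R : Type*} [Ring R] [Algebra ℂ R]
    (e : Fin n → Fin n → R) (i j : Fin n) : R :=
  e i j + (((n : ℂ) - 1) / 2) • (if i = j then (1 : R) else 0)

/-- The translated Casimir elements `ĉ_q := Σ_i ê_{ii}^q`. -/
noncomputable def chat {n : ℕ} {R : Type*} [Ring R] [Algebra ℂ R]
    (e : Fin n → Fin n → R) (q : ℕ) : R :=
  ∑ i : Fin n, epow (ehat e) q i i

/-!
The commutator of `ê_{kl}` with `ê^q_{ij}` is given by the same formula as the bracket of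
generators, by induction on `q` (a Leibniz rule for `[ê_{kl}, -]`); the shift by a scalar
does not change commutators. Summing `[ê_{ik}, ê^q_{kj}]` over `k` expresses
`Σ_k ê^q_{kj} ê_{ik}` through `ê^{q+1}_{ij}`, `ĉ_q` and `ê^q_{ji}`, and the skew-symmetry
`ê_{ki} = (n−1)δ_{ki} − ê_{ik}` turns this into the relation.
-/

def SoRelations {n : ℕ} {R : Type*} [Ring R] (f : Fin n → Fin n → R) : Prop :=
  ∀ k l i j, f k l * f i j - f i j * f k l =
    (if k = i then f l j else 0) + (if k = j then f i l else 0)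
      - (if i = l then f k j else 0) - (if l = j then f i k else 0)

namespace SoRelations

variable {n : ℕ} {R : Type*} [Ring R]

theorem add_smul_diag {S : Type*} [CommRing S] [Algebra S R] {f : Fin n → Fin n → R}
    (hf : SoRelations f) (c : S) :
    SoRelations fun i j => f i j + c • (if i = j then (1 : R) else 0) := by
  intro k l i j
  have commutator_shift : ∀ (a b : R) (p r : Prop) [Decidable p] [Decidable r],
      (a + c • (if p then 1 else 0)) * (b + c • (if r then 1 else 0))
        - (b + c • (if r then 1 else 0)) * (a + c • (if p then 1 else 0)) = a * b - b * a := by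
    intro a b p r _ _
    split_ifs <;> simp only [smul_zero, add_zero, mul_add, add_mul, smul_mul_assoc,
      mul_smul_comm, mul_one, one_mul] <;> module
  rw [commutator_shift, hf k l i j]
  split_ifs <;> subst_vars <;> simp_all [eq_comm]

theorem epow_zero_commutator (f : Fin n → Fin n → R) (k l i j : Fin n) :
    f k l * epow f 0 i j - epow f 0 i j * f k l =
      (if k = i then epow f 0 l j else 0) + (if k = j then epow f 0 i l else 0)
        - (if i = l then epow f 0 k j else 0) - (if l = j then epow f 0 i k else 0) := by
  simp only [epow]
  split_ifs <;> subst_vars <;> simp_all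

theorem epow_commutator {f : Fin n → Fin n → R} (hf : SoRelations f) (q : ℕ) (k l i j : Fin n) :
    f k l * epow f q i j - epow f q i j * f k l =
      (if k = i then epow f q l j else 0) + (if k = j then epow f q i l else 0)
        - (if i = l then epow f q k j else 0) - (if l = j then epow f q i k else 0) := by
  induction q generalizing i j with
  | zero => exact epow_zero_commutator f k l i j
  | succ q ih =>
    have hsum : ∀ i j, ∑ a, f i a * epow f q a j = epow f (q + 1) i j := fun _ _ => rfl
    calc f k l * epow f (q + 1) i j - epow f (q + 1) i j * f k l
        = ∑ a, ((f k l * f i a - f i a * f k l) * epow f q a j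
            + f i a * (f k l * epow f q a j - epow f q a j * f k l)) := by
          simp only [epow, Finset.mul_sum, Finset.sum_mul, ← Finset.sum_sub_distrib]
          exact Finset.sum_congr rfl fun a _ => by noncomm_ring
      _ = _ := by
          simp only [hf _ _ i, ih, add_mul, sub_mul, mul_add, mul_sub, ite_mul, mul_ite, zero_mul,
            mul_zero, Finset.sum_add_distrib, Finset.sum_sub_distrib, Finset.sum_ite_irrel,
            Finset.sum_const_zero, Finset.sum_ite_eq, Finset.sum_ite_eq', Finset.mem_univ,
            if_true, hsum]
          abel

theorem sum_epow_mul {f : Fin n → Fin n → R} (hf : SoRelations f) (q : ℕ) (i j : Fin n) :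
    ∑ k, epow f q k j * f i k = epow f (q + 1) i j - epow f q i j
      - (if i = j then ∑ k, epow f q k k else 0) + n • epow f q i j + epow f q j i := by
  have hsum : ∑ k, f i k * epow f q k j = epow f (q + 1) i j := rfl
  rw [← sub_sub_cancel (∑ k, f i k * epow f q k j) (∑ k, epow f q k j * f i k),
    ← Finset.sum_sub_distrib, hsum]
  simp only [hf.epow_commutator, Finset.sum_sub_distrib, Finset.sum_add_distrib,
    Finset.sum_ite_irrel, Finset.sum_const_zero, Finset.sum_ite_eq, Finset.sum_ite_eq',
    Finset.mem_univ, if_true, Finset.sum_const, Finset.card_univ, Fintype.card_fin]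
  abel

end SoRelations

theorem ehat_eq_smul_sub_ehat {n : ℕ} {R : Type*} [Ring R] [Algebra ℂ R] {e : Fin n → Fin n → R}
    (hskew : ∀ i j, e i j = - e j i) (i j : Fin n) :
    ehat e i j = (if i = j then ((n : ℂ) - 1) • (1 : R) else 0) - ehat e j i := by
  rw [ehat, ehat, hskew i j]
  by_cases h : i = j
  · subst h
    simp only [if_true]
    module
  · simp [h, Ne.symm h]

theorem stmt6_general {n : ℕ} {R : Type*} [Ring R] [Algebra ℂ R] (e : Fin n → Fin n → R)
    (hskew : ∀ i j, e i j = - e j i)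
    (hcomm : ∀ k l i j, e k l * e i j - e i j * e k l =
      (if k = i then e l j else 0) + (if k = j then e i l else 0)
        - (if i = l then e k j else 0) - (if l = j then e i k else 0)) :
    ∀ (q : ℕ) (i j : Fin n),
      epow (ehat e) (q + 1) i j =
        (if j = i then chat e q else 0) - epow (ehat e) q j i
          - ∑ k : Fin n, epow (ehat e) q k j * ehat e k i := by
  intro q i j
  have hso : SoRelations (ehat e) := SoRelations.add_smul_diag hcomm _
  have hsum_skew : ∑ k, epow (ehat e) q k j * ehat e k i
      = ((n : ℂ) - 1) • epow (ehat e) q i j - ∑ k, epow (ehat e) q k j * ehat e i k := by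
    simp only [ehat_eq_smul_sub_ehat hskew _ i, mul_sub, mul_ite, mul_zero, mul_smul_comm,
      mul_one, Finset.sum_sub_distrib, Finset.sum_ite_eq', Finset.mem_univ, if_true]
  rw [hsum_skew, hso.sum_epow_mul, chat, ← Nat.cast_smul_eq_nsmul ℂ]
  by_cases h : i = j
  · subst h
    simp only [if_true]
    module
  · simp only [h, Ne.symm h, if_false]
    module

/-- The key relation `ê_{ij}^{q+1} = δ_{ji} ĉ_q − ê_{ji}^q − Σ_k ê_{kj}^q ê_{ki}`
in `U(so(n,ℂ))`. -/
theorem stmt6 {n : ℕ} {R : Type*} [Ring R] [Algebra ℂ R] (e : Fin n → Fin n → R)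
    (hskew : ∀ i j, e i j = - e j i)
    (hdiag : ∀ i, e i i = 0)
    (hcomm : ∀ k l i j, e k l * e i j - e i j * e k l =
      (if k = i then e l j else 0) + (if k = j then e i l else 0)
        - (if i = l then e k j else 0) - (if l = j then e i k else 0)) :
    ∀ (q : ℕ) (i j : Fin n),
      epow (ehat e) (q + 1) i j =
        (if j = i then chat e q else 0) - epow (ehat e) q j i
          - ∑ k : Fin n, epow (ehat e) q k j * ehat e k i :=
  stmt6_general e hskew hcomm
end

section
/- (Universal Bochner-Weitzenböck formula) In U(so(n,C)), the translated element ê_{ij}^q equals a linear combination of the ê_{ji}^p with Casimir coefficients: ê_{ij}^q = (−1)^q ê_{ji}^q − ((1−(−1)^q)/2) ê_{ji}^{q−1} + Σ_{p=0}^{q−1} (−1)^p ĉ_{q−1−p} ê_{ji}^p, for all q ≥ 1. -/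
/-!
Write `E` for the matrix `(ê_{ij})` over `R` and `X_{ab} = single b a 1 - single a b 1` for the
rotation generator in the `(a, b)`-plane. The relations of `so(n)` say exactly that
`[ê_{ab}, E_{ij}] = [E, X_{ab}]_{ij}`, i.e. that `E` commutes with `ê_{ab} • 1 + X_{ab}`; hence so
does every power `E^q`. Contracting this relation for `E^q` against `ê_{ki}` and using
`E + Eᵀ = n - 1` gives the recurrence `(E^{q+1})ᵀ = ĉ_q - E^q - (E^q)ᵀ E`, whose solution by
induction on `q` is the formula, read off at the entry `(j, i)`.
-/

open Matrix Finset

section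

variable {n : ℕ} {R : Type*} [Ring R]

theorem epow_eq_pow_apply (f : Fin n → Fin n → R) (q : ℕ) (i j : Fin n) :
    epow f q i j = (of f ^ q) i j := by
  induction q generalizing i j with
  | zero => simp [epow, one_apply]
  | succ q ih => simp [epow, pow_succ', mul_apply, ih]

def twist (x : R) (a b : Fin n) : Matrix (Fin n) (Fin n) R :=
  scalar (Fin n) x + single b a 1 - single a b 1

theorem commute_twist_iff (M : Matrix (Fin n) (Fin n) R) (x : R) (a b : Fin n) :
    Commute M (twist x a b) ↔ ∀ i j, x * M i j - M i j * x =
      (if j = a then M i b else 0) - (if j = b then M i a else 0)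
        - (if i = b then M a j else 0) + (if i = a then M b j else 0) := by
  have hMX (c d i j : Fin n) : (M * single c d (1 : R)) i j = if j = d then M i c else 0 := by
    by_cases h : j = d
    · subst h; simp
    · simp [h]
  have hXM (c d i j : Fin n) : (single c d (1 : R) * M) i j = if i = c then M d j else 0 := by
    by_cases h : i = c
    · subst h; simp
    · simp [h]
  refine ext_iff.symm.trans (forall₂_congr fun i j => ?_)
  rw [← sub_eq_zero, ← sub_eq_zero (a := x * M i j - M i j * x), ← neg_eq_zero (a := _ - _)]
  simp only [twist, mul_add, add_mul, mul_sub, sub_mul, Matrix.add_apply, Matrix.sub_apply, hMX,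
    hXM, scalar_apply, mul_diagonal, diagonal_mul]
  abel_nf

theorem sum_commutator_eq_of_commute_twist (E M : Matrix (Fin n) (Fin n) R)
    (hM : ∀ a b, Commute M (twist (E a b) a b)) (i j : Fin n) :
    ∑ k, (E k j * M k i - M k i * E k j) =
      n * M j i - M j i + M i j - if i = j then trace M else 0 := by
  simp only [fun k => (commute_twist_iff M (E k j) k j).mp (hM k j) k i, if_true,
    Finset.sum_add_distrib, Finset.sum_sub_distrib, Finset.sum_ite_eq, Finset.sum_ite_eq',
    Finset.sum_ite_irrel, Finset.mem_univ, Finset.sum_const, Finset.card_univ, Fintype.card_fin,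
    nsmul_eq_mul, mul_zero, trace, diag_apply]
  split_ifs <;> abel

theorem transpose_pow_succ_of_commute_twist (E : Matrix (Fin n) (Fin n) R)
    (hE : E + Eᵀ = (n - 1 : Matrix (Fin n) (Fin n) R))
    (hcomm : ∀ a b, Commute E (twist (E a b) a b)) (q : ℕ) :
    (E ^ (q + 1))ᵀ = trace (E ^ q) • 1 - E ^ q - (E ^ q)ᵀ * E := by
  ext i j
  have hE_apply (k : Fin n) : E j k = (if j = k then (n : R) - 1 else 0) - E k j := by
    have h := congr_fun₂ hE j k
    simp only [Matrix.add_apply, transpose_apply, Matrix.sub_apply, Matrix.natCast_apply,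
      Nat.cast_ite, Nat.cast_zero, one_apply] at h
    rw [eq_sub_iff_add_eq, h]
    split_ifs <;> simp
  have hpow (a b : Fin n) : Commute (E ^ q) (twist (E a b) a b) := (hcomm a b).pow_left q
  calc (E ^ (q + 1))ᵀ i j = ∑ k, E j k * (E ^ q) k i := by
        rw [pow_succ', transpose_apply, mul_apply]
    _ = (n - 1) * (E ^ q) j i - ∑ k, E k j * (E ^ q) k i := by
      simp only [hE_apply, sub_mul, ite_mul, zero_mul, Finset.sum_sub_distrib, Finset.sum_ite_eq,
        Finset.mem_univ, if_true]
    _ = (n - 1) * (E ^ q) j i - ∑ k, (E ^ q) k i * E k j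
          - ∑ k, (E k j * (E ^ q) k i - (E ^ q) k i * E k j) := by
      rw [sub_sub, ← Finset.sum_add_distrib]
      simp only [add_sub_cancel]
    _ = _ := by
      rw [sum_commutator_eq_of_commute_twist E _ hpow]
      simp only [Matrix.sub_apply, Matrix.smul_apply, one_apply, smul_eq_mul, mul_ite, mul_one,
        mul_zero, transpose_apply, mul_apply, sub_mul, one_mul]
      abel

theorem transpose_pow_succ_eq_sum [Algebra ℂ R] (E : Matrix (Fin n) (Fin n) R)
    (hE : E + Eᵀ = (n - 1 : Matrix (Fin n) (Fin n) R))
    (hcomm : ∀ a b, Commute E (twist (E a b) a b)) (q : ℕ) :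
    (E ^ (q + 1))ᵀ = (-1 : ℂ) ^ (q + 1) • E ^ (q + 1)
      - ((1 - (-1 : ℂ) ^ (q + 1)) / 2) • E ^ q
      + ∑ p ∈ range (q + 1), (-1 : ℂ) ^ p • (trace (E ^ (q - p)) • E ^ p) := by
  induction q with
  | zero =>
    rw [transpose_pow_succ_of_commute_twist E hE hcomm]
    norm_num
    abel
  | succ q ih =>
    rw [transpose_pow_succ_of_commute_twist E hE hcomm, ih, sum_range_succ' _ (q + 1)]
    have hcoef : (1 - (-1 : ℂ) ^ (q + 1 + 1)) / 2 = 1 - (1 - (-1 : ℂ) ^ (q + 1)) / 2 := by ring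
    rw [hcoef, sub_smul, one_smul]
    simp only [add_mul, sub_mul, smul_mul_assoc, Finset.sum_mul, ← pow_succ, pow_succ (-1 : ℂ),
      Nat.add_sub_add_right, Nat.sub_zero, pow_zero, one_smul, mul_neg_one, neg_smul, neg_mul,
      Finset.sum_neg_distrib]
    abel

theorem add_algebraMap_mul_sub_mul {K : Type*} [CommSemiring K] [Algebra K R]
    (A B : R) (r s : K) :
    (A + algebraMap K R r) * (B + algebraMap K R s)
      - (B + algebraMap K R s) * (A + algebraMap K R r) = A * B - B * A := by
  simp only [mul_add, add_mul, Algebra.commutes r, Algebra.commutes s A]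
  abel

variable [Algebra ℂ R] (e : Fin n → Fin n → R)

theorem ehat_eq_add_algebraMap (i j : Fin n) :
    ehat e i j = e i j + algebraMap ℂ R (if i = j then ((n : ℂ) - 1) / 2 else 0) := by
  rw [ehat]
  split_ifs <;> simp [Algebra.algebraMap_eq_smul_one]

theorem of_ehat_add_transpose (hskew : ∀ i j, e i j = - e j i) :
    of (ehat e) + (of (ehat e))ᵀ = (n - 1 : Matrix (Fin n) (Fin n) R) := by
  ext i j
  simp only [Matrix.add_apply, transpose_apply, of_apply, ehat_eq_add_algebraMap, hskew i j,
    Matrix.sub_apply, Matrix.natCast_apply, one_apply, eq_comm (a := j)]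
  split_ifs
  · rw [add_add_add_comm, neg_add_cancel, zero_add, ← map_add, add_halves]; simp
  · simp

theorem commute_of_ehat_twist
    (hcomm : ∀ k l i j, e k l * e i j - e i j * e k l =
      (if k = i then e l j else 0) + (if k = j then e i l else 0)
        - (if i = l then e k j else 0) - (if l = j then e i k else 0))
    (a b : Fin n) : Commute (of (ehat e)) (twist (of (ehat e) a b) a b) := by
  rw [commute_twist_iff]
  intro i j
  simp only [of_apply, ehat_eq_add_algebraMap, add_algebraMap_mul_sub_mul, hcomm a b i j]
  by_cases hai : a = i <;> by_cases haj : a = j <;> by_cases hib : i = b <;>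
    by_cases hbj : b = j <;> simp_all [eq_comm] <;> abel

theorem chat_eq_trace (q : ℕ) : chat e q = trace (of (ehat e) ^ q) := by
  simp [chat, trace, epow_eq_pow_apply]

end

theorem stmt7_general {n : ℕ} {R : Type*} [Ring R] [Algebra ℂ R] (e : Fin n → Fin n → R)
    (hskew : ∀ i j, e i j = - e j i)
    (hcomm : ∀ k l i j, e k l * e i j - e i j * e k l =
      (if k = i then e l j else 0) + (if k = j then e i l else 0)
        - (if i = l then e k j else 0) - (if l = j then e i k else 0)) :
    ∀ (q : ℕ), 1 ≤ q → ∀ (i j : Fin n),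
      epow (ehat e) q i j =
        ((-1 : ℂ) ^ q) • epow (ehat e) q j i
          - ((1 - (-1 : ℂ) ^ q) / 2) • epow (ehat e) (q - 1) j i
          + ∑ p ∈ Finset.range q,
              ((-1 : ℂ) ^ p) • (chat e (q - 1 - p) * epow (ehat e) p j i) := by
  intro q hq i j
  obtain ⟨q, rfl⟩ := Nat.exists_eq_add_of_le' hq
  have h := congr_fun₂ (transpose_pow_succ_eq_sum (of (ehat e)) (of_ehat_add_transpose e hskew)
    (commute_of_ehat_twist e hcomm) q) j i
  simpa [epow_eq_pow_apply, chat_eq_trace, Matrix.sum_apply] using h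

/-- The universal Bochner-Weitzenböck formula in `U(so(n,ℂ))`: for `q ≥ 1`,
`ê_{ij}^q = (−1)^q ê_{ji}^q − ((1−(−1)^q)/2) ê_{ji}^{q−1} + Σ_{p=0}^{q−1} (−1)^p ĉ_{q−1−p} ê_{ji}^p`. -/
theorem stmt7 {n : ℕ} {R : Type*} [Ring R] [Algebra ℂ R] (e : Fin n → Fin n → R)
    (hskew : ∀ i j, e i j = - e j i)
    (hdiag : ∀ i, e i i = 0)
    (hcomm : ∀ k l i j, e k l * e i j - e i j * e k l =
      (if k = i then e l j else 0) + (if k = j then e i l else 0)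
        - (if i = l then e k j else 0) - (if l = j then e i k else 0)) :
    ∀ (q : ℕ), 1 ≤ q → ∀ (i j : Fin n),
      epow (ehat e) q i j =
        ((-1 : ℂ) ^ q) • epow (ehat e) q j i
          - ((1 - (-1 : ℂ) ^ q) / 2) • epow (ehat e) (q - 1) j i
          + ∑ p ∈ Finset.range q,
              ((-1 : ℂ) ^ p) • (chat e (q - 1 - p) * epow (ehat e) p j i) :=
  stmt7_general e hskew hcomm
end

section
/- With p^ρ_λ(ξ)φ := Π^ρ_λ(φ ⊗ ξ) the Clifford homomorphisms defined by orthogonal projections onto irreducible summands V_λ of V_ρ ⊗ C^n, the relation Σ_i p^ρ_λ(e_i) π_ρ(e_{ij}) = w(ρ;λ) p^ρ_λ(e_j) holds for each j, where the conformal weight is w(ρ;λ) = (1/2)(⟨δ+λ, δ+λ⟩ − ⟨δ+ρ, δ+ρ⟩ − n + 1). -/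
/-!
Apply the Casimir `Σ_{k,k'} π_λ(e_{kk'}) π_λ(e_{k'k})` of `V_λ` to `p(e_j)` and move both factors
to the right through `p` by equivariance. Besides `p(e_j)` composed with the Casimir of `V_ρ`,
the Kronecker deltas leave four copies of `Σ_i p(e_i) π_ρ(e_{ij})` (two by skew-symmetry, two by the
contraction `Σ_k π_λ(e_{kj}) p(e_k) = Σ_k p(e_k) π_ρ(e_{kj}) + (n - 1) p(e_j)`) and `2(n - 1) p(e_j)`.
Comparing the two Casimir eigenvalues gives `4 w(ρ;λ)`.
-/

open Finset LinearMap

theorem LinearMap.finsetSum_comp {R M N P ι : Type*} [CommRing R] [AddCommGroup M] [Module R M]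
    [AddCommGroup N] [Module R N] [AddCommGroup P] [Module R P]
    (s : Finset ι) (f : ι → N →ₗ[R] P) (g : M →ₗ[R] N) :
    (∑ i ∈ s, f i) ∘ₗ g = ∑ i ∈ s, f i ∘ₗ g :=
  map_sum (lcomp R P g) f s

theorem LinearMap.comp_finsetSum {R M N P ι : Type*} [CommRing R] [AddCommGroup M] [Module R M]
    [AddCommGroup N] [Module R N] [AddCommGroup P] [Module R P]
    (s : Finset ι) (f : N →ₗ[R] P) (g : ι → M →ₗ[R] N) :
    f ∘ₗ (∑ i ∈ s, g i) = ∑ i ∈ s, f ∘ₗ g i :=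
  map_sum (llcomp R M N P f) g s

namespace CliffordHom

variable {R M N : Type*} [CommRing R] [AddCommGroup M] [Module R M] [AddCommGroup N] [Module R N]
  {n : ℕ}

def casimir (A : Fin n → Fin n → Module.End R M) : Module.End R M :=
  ∑ k, ∑ k', A k k' * A k' k

/-- `p i` plays the role of `p(e_i)`, and `A`, `B` of `π_ρ(e_{kk'})`, `π_λ(e_{kk'})`. -/
def IsEquivariant (A : Fin n → Fin n → Module.End R M) (B : Fin n → Fin n → Module.End R N)
    (p : Fin n → (M →ₗ[R] N)) : Prop :=
  ∀ k k' i, (if k = i then p k' else 0) - (if k' = i then p k else 0) =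
    B k k' ∘ₗ p i - p i ∘ₗ A k k'

variable {A : Fin n → Fin n → Module.End R M} {B : Fin n → Fin n → Module.End R N}
  {p : Fin n → (M →ₗ[R] N)}

theorem IsEquivariant.comp_eq (hp : IsEquivariant A B p) (k k' i : Fin n) :
    B k k' ∘ₗ p i =
      p i ∘ₗ A k k' + ((if k = i then p k' else 0) - (if k' = i then p k else 0)) := by
  rw [hp]; abel

theorem IsEquivariant.sum_comp_eq (hp : IsEquivariant A B p) (j : Fin n) :
    ∑ k, B k j ∘ₗ p k = ∑ k, p k ∘ₗ A k j + ((n : R) - 1) • p j := by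
  simp only [hp.comp_eq, sum_add_distrib, sum_sub_distrib, sum_ite_eq, mem_univ, if_true,
    sum_const, card_univ, Fintype.card_fin]
  rw [sub_smul, one_smul, Nat.cast_smul_eq_nsmul]

theorem IsEquivariant.casimir_comp_eq (hA : ∀ i j, A i j = -A j i) (hB : ∀ i j, B i j = -B j i)
    (hp : IsEquivariant A B p) (j : Fin n) :
    casimir B ∘ₗ p j =
      p j ∘ₗ casimir A + (4 : R) • ∑ i, p i ∘ₗ A i j + (2 * ((n : R) - 1)) • p j := by
  have hterm : ∀ k k', (B k k' * B k' k) ∘ₗ p j =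
      p j ∘ₗ (A k k' * A k' k)
      + ((if k = j then p k' ∘ₗ A k' k else 0) - (if k' = j then p k ∘ₗ A k' k else 0))
      + ((if k' = j then B k k' ∘ₗ p k else 0) - (if k = j then B k k' ∘ₗ p k' else 0)) := by
    intro k k'
    rw [Module.End.mul_eq_comp, comp_assoc, hp.comp_eq k' k j, comp_add, comp_sub, ← comp_assoc,
      hp.comp_eq k k' j]
    simp only [add_comp, sub_comp, apply_ite (fun f => B k k' ∘ₗ f),
      apply_ite (fun f : M →ₗ[R] N => f ∘ₗ A k' k), comp_zero, zero_comp, Module.End.mul_eq_comp,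
      comp_assoc]
  have hAj : ∑ k, p k ∘ₗ A j k = -∑ k, p k ∘ₗ A k j := by
    rw [← sum_neg_distrib]; exact sum_congr rfl fun k _ => by rw [hA j k, comp_neg]
  have hBj : ∑ k, B j k ∘ₗ p k = -∑ k, B k j ∘ₗ p k := by
    rw [← sum_neg_distrib]; exact sum_congr rfl fun k _ => by rw [hB j k, neg_comp]
  simp only [casimir, finsetSum_comp, comp_finsetSum, hterm, sum_add_distrib, sum_sub_distrib,
    sum_ite_irrel, sum_const_zero, sum_ite_eq', mem_univ, if_true]
  rw [hAj, hBj, hp.sum_comp_eq]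
  module

theorem IsEquivariant.four_smul_sum_comp_eq (hA : ∀ i j, A i j = -A j i)
    (hB : ∀ i j, B i j = -B j i) (hp : IsEquivariant A B p) {cA cB : R}
    (hcA : casimir A = cA • 1) (hcB : casimir B = cB • 1) (j : Fin n) :
    (4 : R) • ∑ i, p i ∘ₗ A i j = (cB - cA - 2 * ((n : R) - 1)) • p j := by
  have h := hp.casimir_comp_eq hA hB j
  simp only [hcA, hcB, smul_comp, comp_smul, Module.End.one_eq_id, id_comp, comp_id] at h
  rw [sub_smul, sub_smul, h]
  abel

end CliffordHom

/-- Conformal weights and Clifford homomorphisms.  `V` is the family of irreducible summands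
`V_λ` of `V_ρ ⊗ ℂⁿ`, `p l i` is the Clifford homomorphism `p^ρ_λ(e_i) : V_ρ → V_λ`,
`ρw`, `lw l`, `δw` are the highest weights `ρ`, `λ` and the half-sum of positive roots `δ`
(vectors in Euclidean space `ℝ^m`).  The representations have the correct Casimir eigenvalues
`2⟨δ+ρ,δ+ρ⟩ − 2⟨δ,δ⟩`, and the Clifford homomorphisms are `so(n)`-equivariant:
`δ_{ki} p^ρ_λ(e_l) − δ_{li} p^ρ_λ(e_k) = π_λ(e_{kl}) p^ρ_λ(e_i) − p^ρ_λ(e_i) π_ρ(e_{kl})`.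
Then `Σ_i p^ρ_λ(e_i) π_ρ(e_{ij}) = w(ρ;λ) p^ρ_λ(e_j)` with
`w(ρ;λ) = (1/2)(⟨δ+λ,δ+λ⟩ − ⟨δ+ρ,δ+ρ⟩ − n + 1)`. -/
theorem stmt11 {n m N : ℕ} {Vρ : Type*} [AddCommGroup Vρ] [Module ℂ Vρ]
    (V : Fin N → Type*) [∀ l, AddCommGroup (V l)] [∀ l, Module ℂ (V l)]
    (ρw : Fin m → ℝ) (lw : Fin N → Fin m → ℝ) (δw : Fin m → ℝ)
    (πρ : Fin n → Fin n → Module.End ℂ Vρ)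
    (πl : ∀ l, Fin n → Fin n → Module.End ℂ (V l))
    (p : ∀ l, Fin n → (Vρ →ₗ[ℂ] V l))
    (hskewρ : ∀ i j, πρ i j = - πρ j i)
    (hskewl : ∀ l i j, πl l i j = - πl l j i)
    (hcasρ : ∑ i : Fin n, ∑ j : Fin n, πρ i j * πρ j i =
      (((2 * ∑ i : Fin m, (δw i + ρw i) ^ 2 - 2 * ∑ i : Fin m, (δw i) ^ 2 : ℝ) : ℂ)) •
        (1 : Module.End ℂ Vρ))
    (hcasl : ∀ l, ∑ i : Fin n, ∑ j : Fin n, πl l i j * πl l j i =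
      (((2 * ∑ i : Fin m, (δw i + lw l i) ^ 2 - 2 * ∑ i : Fin m, (δw i) ^ 2 : ℝ) : ℂ)) •
        (1 : Module.End ℂ (V l)))
    (hequiv : ∀ l (k k' i : Fin n),
      (if k = i then p l k' else 0) - (if k' = i then p l k else 0) =
        (πl l k k') ∘ₗ (p l i) - (p l i) ∘ₗ (πρ k k')) :
    ∀ l (j : Fin n),
      ∑ i : Fin n, (p l i) ∘ₗ (πρ i j) =
        ((((1 : ℝ) / 2) * ((∑ i : Fin m, (δw i + lw l i) ^ 2)
            - (∑ i : Fin m, (δw i + ρw i) ^ 2) - (n : ℝ) + 1) : ℝ) : ℂ) • p l j := by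
  intro l j
  have h4 := CliffordHom.IsEquivariant.four_smul_sum_comp_eq hskewρ (hskewl l) (hequiv l)
    hcasρ (hcasl l) j
  calc ∑ i, p l i ∘ₗ πρ i j = (1 / 4 : ℂ) • (4 : ℂ) • ∑ i, p l i ∘ₗ πρ i j := by
        rw [smul_smul]; norm_num
    _ = _ := by
        rw [h4, smul_smul]
        congr 1
        push_cast
        ring
end

section
/- The Clifford homomorphisms satisfy Σ_λ w(ρ;λ)^q p^ρ_λ(e_i)* p^ρ_λ(e_j) = π_ρ(e_{ij}^q) for all q ≥ 0 and all i, j; in particular for q = 0, Σ_λ p^ρ_λ(e_j)* p^ρ_λ(e_i) = δ_{ji} id, and taking traces over i = j gives Σ_λ w(ρ;λ)^q Σ_i p^ρ_λ(e_i)* p^ρ_λ(e_i) = π_ρ(c_q). -/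
section epow

variable {n : ℕ} {R : Type*} [Ring R] (e : Fin n → Fin n → R)

theorem epow_succ_right (q : ℕ) (i j : Fin n) :
    epow e (q + 1) i j = ∑ k, epow e q i k * e k j := by
  induction q generalizing i j with
  | zero => simp [epow]
  | succ q ih =>
    calc epow e (q + 2) i j = ∑ k, e i k * ∑ m, epow e q k m * e m j := by
          simp only [epow, ← ih]
      _ = ∑ m, (∑ k, e i k * epow e q k m) * e m j := by
          simp_rw [Finset.mul_sum, Finset.sum_mul, mul_assoc]
          exact Finset.sum_comm
      _ = ∑ m, epow e (q + 1) i m * e m j := rfl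

theorem eq_epow_of_succ_right (f : ℕ → Fin n → Fin n → R)
    (h_zero : ∀ i j, f 0 i j = if i = j then 1 else 0)
    (h_succ : ∀ q i j, f (q + 1) i j = ∑ k, f q i k * e k j) (q : ℕ) (i j : Fin n) :
    f q i j = epow e q i j := by
  induction q generalizing i j with
  | zero => exact h_zero i j
  | succ q ih => simp only [h_succ, epow_succ_right, ih]

end epow

section conformalWeights

variable {n : ℕ} {ι R M : Type*} [Fintype ι] [CommRing R] [AddCommGroup M] [Module R M]
  {V : ι → Type*} [∀ l, AddCommMonoid (V l)] [∀ l, Module R (V l)]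
  (a : ∀ l, Fin n → (V l →ₗ[R] M)) (p : ∀ l, Fin n → (M →ₗ[R] V l))
  (π : Fin n → Fin n → Module.End R M) (c : ι → R)

theorem sum_pow_succ_smul_comp (hc : ∀ l j, ∑ i, p l i ∘ₗ π i j = c l • p l j)
    (q : ℕ) (i j : Fin n) :
    ∑ l, c l ^ (q + 1) • (a l i ∘ₗ p l j) = ∑ k, (∑ l, c l ^ q • (a l i ∘ₗ p l k)) * π k j := by
  calc ∑ l, c l ^ (q + 1) • (a l i ∘ₗ p l j)
      = ∑ l, c l ^ q • (a l i ∘ₗ ∑ k, p l k ∘ₗ π k j) := by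
        simp only [hc, LinearMap.comp_smul, pow_succ, mul_smul]
    _ = ∑ k, (∑ l, c l ^ q • (a l i ∘ₗ p l k)) * π k j := by
        ext x
        simp only [LinearMap.sum_apply, LinearMap.smul_apply, LinearMap.coe_comp, Function.comp_apply,
          map_sum, Finset.smul_sum, Module.End.mul_apply]
        exact Finset.sum_comm

theorem sum_pow_smul_comp_eq_epow
    (h_complete : ∀ i j, ∑ l, a l i ∘ₗ p l j = if i = j then 1 else 0)
    (hc : ∀ l j, ∑ i, p l i ∘ₗ π i j = c l • p l j) (q : ℕ) (i j : Fin n) :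
    ∑ l, c l ^ q • (a l i ∘ₗ p l j) = epow π q i j :=
  eq_epow_of_succ_right π (fun q i j ↦ ∑ l, c l ^ q • (a l i ∘ₗ p l j))
    (by simpa only [pow_zero, one_smul] using h_complete)
    (sum_pow_succ_smul_comp a p π c hc) q i j

end conformalWeights

/-- The Clifford homomorphisms `p^ρ_λ` satisfy
`Σ_λ w(ρ;λ)^q p^ρ_λ(e_i)* p^ρ_λ(e_j) = π_ρ(e_{ij}^q)` for all `q ≥ 0` and all `i, j`;
in particular `Σ_λ p^ρ_λ(e_j)* p^ρ_λ(e_i) = δ_{ji} id` (the completeness relation), and taking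
traces over `i = j` gives `Σ_λ w(ρ;λ)^q Σ_i p^ρ_λ(e_i)* p^ρ_λ(e_i) = π_ρ(c_q)`.
Here the completeness relation and the conformal-weight relation
`Σ_i p^ρ_λ(e_i) π_ρ(e_{ij}) = w(ρ;λ) p^ρ_λ(e_j)` characterize the data. -/
theorem stmt12 {n N : ℕ}
    {Vρ : Type*} [NormedAddCommGroup Vρ] [InnerProductSpace ℂ Vρ] [FiniteDimensional ℂ Vρ]
    (V : Fin N → Type*) [∀ l, NormedAddCommGroup (V l)] [∀ l, InnerProductSpace ℂ (V l)]
    [∀ l, FiniteDimensional ℂ (V l)]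
    (p : ∀ l, Fin n → (Vρ →ₗ[ℂ] V l)) (w : Fin N → ℝ)
    (πρ : Fin n → Fin n → Module.End ℂ Vρ)
    (hcomplete : ∀ i j : Fin n,
      (∑ l, (LinearMap.adjoint (p l j)) ∘ₗ (p l i) : Module.End ℂ Vρ) =
        if j = i then 1 else 0)
    (hw : ∀ l (j : Fin n),
      ∑ i : Fin n, (p l i) ∘ₗ (πρ i j) = ((w l : ℂ)) • p l j) :
    (∀ (q : ℕ) (i j : Fin n),
      (∑ l, ((w l : ℂ) ^ q) • ((LinearMap.adjoint (p l i)) ∘ₗ (p l j)) : Module.End ℂ Vρ) =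
        epow πρ q i j) ∧
    (∀ q : ℕ,
      (∑ l, ((w l : ℂ) ^ q) •
          (∑ i : Fin n, (LinearMap.adjoint (p l i)) ∘ₗ (p l i)) : Module.End ℂ Vρ) =
        ∑ i : Fin n, epow πρ q i i) := by
  have h_entries (q : ℕ) (i j : Fin n) :=
    sum_pow_smul_comp_eq_epow (fun l i ↦ LinearMap.adjoint (p l i)) p πρ (fun l ↦ (w l : ℂ))
      (fun i j ↦ hcomplete j i) hw q i j
  refine ⟨h_entries, fun q ↦ ?_⟩
  simp only [Finset.smul_sum]
  rw [Finset.sum_comm]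
  exact Finset.sum_congr rfl fun i _ ↦ h_entries q i i
end
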